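/- arXiv:2405.04346 — 2 statements merged into one kernel-verified Lean document; each statement's English description precedes it below -/
import Mathlib

section
/- (Generation of 𝒮₁.) Let Γ have at least two elements and let S be a nonempty list over Γ. Then the Levenshtein ball of radius 1 around S equals the set of single-replacement edits of the expansion: {S' : List Γ | d_lev(S, S') ≤ 1} = {ψ((φ(S)).set i c) | i < 2·|S| + 1, c : Option Γ}. -/
/-- The expansion map: insert the special symbol `ξ` (encoded as `none`)
before and after every character of `S`. -/
def phi {Γ : Type*} (S : List Γ) : List (Option Γ) :=
  none :: S.flatMap (fun c => [some c, none])

/-- The contraction map: remove all occurrences of `ξ` (encoded as `none`). -/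
def psi {Γ : Type*} (T : List (Option Γ)) : List Γ :=
  T.filterMap id

/-- Costs of the edit operations (as in the former `Mathlib.Data.List.EditDistance.Defs`). -/
structure Levenshtein.Cost (α β δ : Type*) where
  delete : α → δ
  insert : β → δ
  substitute : α → β → δ

/-- The default unit cost (as in the former Mathlib). -/
def Levenshtein.defaultCost {α : Type*} [DecidableEq α] : Levenshtein.Cost α α ℕ where
  delete _ := 1
  insert _ := 1
  substitute a b := if a = b then 0 else 1

/-- The Levenshtein distance, by the recurrence the former Mathlib definition satisfies. -/
def levenshtein {α β δ : Type*} [AddZeroClass δ] [Min δ] (C : Levenshtein.Cost α β δ) :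
    List α → List β → δ
  | [], [] => 0
  | [], y :: ys => C.insert y + levenshtein C [] ys
  | x :: xs, [] => C.delete x + levenshtein C xs []
  | x :: xs, y :: ys =>
    min (C.delete x + levenshtein C xs (y :: ys))
      (min (C.insert y + levenshtein C (x :: xs) ys) (C.substitute x y + levenshtein C xs ys))

/-- The Levenshtein (edit) distance with unit costs. -/
def dlev {Γ : Type*} [DecidableEq Γ] (S S' : List Γ) : ℕ :=
  levenshtein Levenshtein.defaultCost S S'

/-! In `phi S` the even slot `2k` is the gap before the `k`-th letter and the odd slot `2k + 1`
holds that letter. Overwriting a slot by `c : Option Γ` and contracting therefore replaces an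
optional symbol of `S` (nothing, or one letter) by the optional symbol `c`, and these are exactly
the words within edit distance one: insertions, deletions, substitutions and `S` itself. -/

section Levenshtein

variable {Γ : Type*} [DecidableEq Γ]

lemma dlev_nil_left (ys : List Γ) : dlev [] ys = ys.length := by
  induction ys with
  | nil => rw [dlev, levenshtein]; rfl
  | cons y ys ih => rw [dlev, levenshtein, ← dlev, ih]; simp [Levenshtein.defaultCost]; omega

lemma dlev_nil_right (xs : List Γ) : dlev xs [] = xs.length := by
  induction xs with
  | nil => rw [dlev, levenshtein]; rfl
  | cons x xs ih => rw [dlev, levenshtein, ← dlev, ih]; simp [Levenshtein.defaultCost]; omega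

lemma dlev_cons_cons (x y : Γ) (xs ys : List Γ) :
    dlev (x :: xs) (y :: ys) =
      min (1 + dlev xs (y :: ys))
        (min (1 + dlev (x :: xs) ys) ((if x = y then 0 else 1) + dlev xs ys)) := by
  rw [dlev, levenshtein]; rfl

lemma dlev_cons_le (x : Γ) (xs ys : List Γ) : dlev (x :: xs) (x :: ys) ≤ dlev xs ys := by
  rw [dlev_cons_cons]
  exact (min_le_right _ _).trans (by simp)

@[simp] lemma dlev_self (xs : List Γ) : dlev xs xs = 0 := by
  induction xs with
  | nil => exact dlev_nil_left []
  | cons x xs ih => exact Nat.le_zero.mp (ih ▸ dlev_cons_le x xs xs)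

lemma dlev_append_left_le (A xs ys : List Γ) : dlev (A ++ xs) (A ++ ys) ≤ dlev xs ys := by
  induction A with
  | nil => rfl
  | cons a A ih => exact (dlev_cons_le a _ _).trans ih

lemma eq_of_dlev_eq_zero {xs ys : List Γ} (h : dlev xs ys = 0) : xs = ys := by
  induction xs generalizing ys with
  | nil => simpa [dlev_nil_left, eq_comm] using h
  | cons x xs ih =>
    cases ys with
    | nil => simp [dlev_nil_right] at h
    | cons y ys =>
      rw [dlev_cons_cons] at h
      by_cases hxy : x = y
      · rw [if_pos hxy] at h
        rw [hxy, ih (ys := ys) (by omega)]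
      · rw [if_neg hxy] at h
        omega

lemma dlev_toList_append_le_one (m c : Option Γ) (B : List Γ) :
    dlev (m.toList ++ B) (c.toList ++ B) ≤ 1 := by
  cases B <;> cases m <;> cases c <;>
    simp [dlev_cons_cons, dlev_nil_left, dlev_nil_right] <;> split_ifs <;> simp

end Levenshtein

section SingleEdit

variable {Γ : Type*}

/-- The four cases of `(m, c)` are no edit, insertion, deletion and substitution. -/
def SingleEdit (S S' : List Γ) : Prop :=
  ∃ (A B : List Γ) (m c : Option Γ), S = A ++ m.toList ++ B ∧ S' = A ++ c.toList ++ B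

lemma SingleEdit.cons {S S' : List Γ} (h : SingleEdit S S') (x : Γ) :
    SingleEdit (x :: S) (x :: S') := by
  obtain ⟨A, B, m, c, rfl, rfl⟩ := h
  exact ⟨x :: A, B, m, c, rfl, rfl⟩

variable [DecidableEq Γ]

lemma SingleEdit.dlev_le_one {S S' : List Γ} (h : SingleEdit S S') : dlev S S' ≤ 1 := by
  obtain ⟨A, B, m, c, rfl, rfl⟩ := h
  simpa only [List.append_assoc] using
    (dlev_append_left_le A _ _).trans (dlev_toList_append_le_one m c B)

lemma singleEdit_of_dlev_le_one {S S' : List Γ} (h : dlev S S' ≤ 1) : SingleEdit S S' := by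
  induction S generalizing S' with
  | nil =>
    rw [dlev_nil_left] at h
    rcases S' with _ | ⟨y, _ | ⟨z, zs⟩⟩
    · exact ⟨[], [], none, none, rfl, rfl⟩
    · exact ⟨[], [], none, some y, rfl, rfl⟩
    · simp at h
  | cons x xs ih =>
    rcases S' with _ | ⟨y, ys⟩
    · obtain rfl : xs = [] := by simpa [dlev_nil_right] using h
      exact ⟨[], [], some x, none, rfl, rfl⟩
    rw [dlev_cons_cons, min_le_iff, min_le_iff] at h
    rcases h with hdel | hins | hsub
    · obtain rfl := eq_of_dlev_eq_zero (by omega : dlev xs (y :: ys) = 0)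
      exact ⟨[], y :: ys, some x, none, rfl, rfl⟩
    · obtain rfl := eq_of_dlev_eq_zero (by omega : dlev (x :: xs) ys = 0)
      exact ⟨[], x :: xs, none, some y, rfl, rfl⟩
    · by_cases hxy : x = y
      · rw [if_pos hxy, zero_add] at hsub
        exact hxy ▸ (ih hsub).cons x
      · rw [if_neg hxy] at hsub
        obtain rfl := eq_of_dlev_eq_zero (by omega : dlev xs ys = 0)
        exact ⟨[], xs, some x, some y, rfl, rfl⟩

theorem dlev_le_one_iff {S S' : List Γ} : dlev S S' ≤ 1 ↔ SingleEdit S S' :=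
  ⟨singleEdit_of_dlev_le_one, SingleEdit.dlev_le_one⟩

end SingleEdit

section Expansion

variable {Γ : Type*}

lemma phi_append (A B : List Γ) :
    phi (A ++ B) = A.flatMap (fun a => [none, some a]) ++ phi B := by
  induction A with
  | nil => rfl
  | cons a A ih => simp_all [phi]

lemma psi_cons (c : Option Γ) (T : List (Option Γ)) : psi (c :: T) = c.toList ++ psi T := by
  cases c <;> rfl

lemma psi_append (T U : List (Option Γ)) : psi (T ++ U) = psi T ++ psi U :=
  List.filterMap_append

lemma psi_flatMap_none_some (A : List Γ) : psi (A.flatMap (fun a => [none, some a])) = A := by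
  induction A with
  | nil => rfl
  | cons a A ih => simpa [psi] using ih

lemma psi_flatMap_some_none (B : List Γ) : psi (B.flatMap (fun b => [some b, none])) = B := by
  induction B with
  | nil => rfl
  | cons b B ih => simpa [psi] using ih

lemma psi_set_phi (A B : List Γ) (m c : Option Γ) :
    psi ((phi (A ++ m.toList ++ B)).set (2 * A.length + m.toList.length) c) =
      A ++ c.toList ++ B := by
  have hlen : (A.flatMap (fun a => [none, some a])).length = 2 * A.length := by
    simp [List.length_flatMap, mul_comm]
  have hmid : psi ((phi (m.toList ++ B)).set m.toList.length c) = c.toList ++ B := by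
    cases m <;> simp [phi, psi_cons, psi_flatMap_some_none]
  rw [List.append_assoc, phi_append, List.set_append_right _ _ (by omega), psi_append,
    psi_flatMap_none_some, hlen, Nat.add_sub_cancel_left, hmid, List.append_assoc]

lemma exists_eq_append_toList_append {S : List Γ} {i : ℕ} (hi : i < 2 * S.length + 1) :
    ∃ (A B : List Γ) (m : Option Γ),
      S = A ++ m.toList ++ B ∧ i = 2 * A.length + m.toList.length := by
  obtain ⟨k, rfl | rfl⟩ := Nat.even_or_odd' i
  · refine ⟨S.take k, S.drop k, none, by simp, ?_⟩
    simp [List.length_take]; omega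
  · have hk : k < S.length := by omega
    refine ⟨S.take k, S.drop (k + 1), some S[k], ?_, ?_⟩
    · simp
    · simp [List.length_take]; omega

end Expansion

theorem levenshtein_ball_one_eq_general {Γ : Type*} [DecidableEq Γ]
    (S : List Γ) :
    {S' : List Γ | dlev S S' ≤ 1} =
      {S' : List Γ | ∃ i < 2 * S.length + 1, ∃ c : Option Γ,
        S' = psi ((phi S).set i c)} := by
  ext S'
  rw [Set.mem_ofPred_eq, Set.mem_ofPred_eq, dlev_le_one_iff]
  constructor
  · rintro ⟨A, B, m, c, rfl, rfl⟩
    exact ⟨2 * A.length + m.toList.length, by cases m <;> simp, c,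
      (psi_set_phi A B m c).symm⟩
  · rintro ⟨i, hi, c, rfl⟩
    obtain ⟨A, B, m, rfl, rfl⟩ := exists_eq_append_toList_append hi
    exact ⟨A, B, m, c, rfl, psi_set_phi A B m c⟩

/-- Generation of `𝒮₁`: the Levenshtein ball of radius 1 around `S` equals the
set of single-replacement edits of the expansion of `S`. -/
theorem levenshtein_ball_one_eq {Γ : Type*} [DecidableEq Γ] [Nontrivial Γ]
    (S : List Γ) (hS : S ≠ []) :
    {S' : List Γ | dlev S S' ≤ 1} =
      {S' : List Γ | ∃ i < 2 * S.length + 1, ∃ c : Option Γ,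
        S' = psi ((phi S).set i c)} :=
  levenshtein_ball_one_eq_general S
end

section
/- (Singleton-alphabet case.) Let Γ be a type with exactly one element, let k : ℕ, and let S be a list over Γ with |S| ≥ k. Then the Levenshtein ball 𝒮_k(S,Γ) = {S' : List Γ | d_lev(S, S') ≤ k} has exactly 2k + 1 elements. -/
@[simp] lemma levenshtein_nil_nil {α β δ : Type*} [AddZeroClass δ] [Min δ]
    (C : Levenshtein.Cost α β δ) : levenshtein C [] [] = 0 := by
  rw [levenshtein]

lemma levenshtein_nil_cons {α β δ : Type*} [AddZeroClass δ] [Min δ]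
    (C : Levenshtein.Cost α β δ) (y : β) (ys : List β) :
    levenshtein C [] (y :: ys) = C.insert y + levenshtein C [] ys := by
  rw [levenshtein]

lemma levenshtein_cons_nil {α β δ : Type*} [AddZeroClass δ] [Min δ]
    (C : Levenshtein.Cost α β δ) (x : α) (xs : List α) :
    levenshtein C (x :: xs) [] = C.delete x + levenshtein C xs [] := by
  rw [levenshtein]

lemma levenshtein_cons_cons {α β δ : Type*} [AddZeroClass δ] [Min δ]
    (C : Levenshtein.Cost α β δ) (x : α) (xs : List α) (y : β) (ys : List β) :
    levenshtein C (x :: xs) (y :: ys) =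
      min (C.delete x + levenshtein C xs (y :: ys))
        (min (C.insert y + levenshtein C (x :: xs) ys) (C.substitute x y + levenshtein C xs ys)) := by
  rw [levenshtein]

/-- Over a one-letter alphabet every substitution is free, so only the length difference costs. -/
lemma dlev_eq_dist_length {Γ : Type*} [DecidableEq Γ] [Subsingleton Γ] (S S' : List Γ) :
    dlev S S' = Nat.dist S.length S'.length := by
  unfold dlev
  induction S generalizing S' with
  | nil =>
    induction S' with
    | nil => simp
    | cons y ys ih =>
      rw [levenshtein_nil_cons, ih]
      simp only [Levenshtein.defaultCost, List.length_nil, List.length_cons, Nat.dist]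
      omega
  | cons x xs ihx =>
    induction S' with
    | nil =>
      rw [levenshtein_cons_nil, ihx]
      simp only [Levenshtein.defaultCost, List.length_nil, List.length_cons, Nat.dist]
      omega
    | cons y ys ihy =>
      rw [levenshtein_cons_cons, ihx, ihy, ihx, Subsingleton.elim x y]
      simp only [Levenshtein.defaultCost, if_true, List.length_cons, Nat.dist]
      omega

lemma List.length_bijective_of_unique {α : Type*} [Unique α] :
    Function.Bijective (List.length : List α → ℕ) :=
  ⟨fun _ _ h => List.ext_get h fun _ _ _ => Subsingleton.elim _ _,
    fun n => ⟨List.replicate n default, List.length_replicate⟩⟩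

lemma Nat.ncard_setOf_dist_le {a k : ℕ} (h : k ≤ a) :
    {n | Nat.dist a n ≤ k}.ncard = 2 * k + 1 := by
  have hIcc : {n | Nat.dist a n ≤ k} = Set.Icc (a - k) (a + k) := by
    ext n
    simp only [Set.mem_ofPred_eq, Set.mem_Icc, Nat.dist]
    omega
  rw [hIcc, ← Finset.coe_Icc, Set.ncard_coe_finset, Nat.card_Icc]
  omega

/-- Singleton-alphabet case: the Levenshtein ball of radius `k` around a sentence of
length at least `k` has exactly `2 * k + 1` elements. -/
theorem ncard_ball_singleton_alphabet {Γ : Type*} [DecidableEq Γ] [Fintype Γ]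
    (hΓ : Fintype.card Γ = 1) (k : ℕ) (S : List Γ) (hS : k ≤ S.length) :
    Set.ncard {S' : List Γ | dlev S S' ≤ k} = 2 * k + 1 := by
  obtain ⟨_⟩ := Fintype.card_eq_one_iff_nonempty_unique.mp hΓ
  have hball : {S' : List Γ | dlev S S' ≤ k} = List.length ⁻¹' {n | Nat.dist S.length n ≤ k} := by
    ext S'
    simp only [Set.mem_ofPred_eq, Set.mem_preimage, dlev_eq_dist_length]
  have hlen := List.length_bijective_of_unique (α := Γ)
  rw [hball, Set.ncard_preimage_of_injective_subset_range hlen.1 (by simp [hlen.2.range_eq]),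
    Nat.ncard_setOf_dist_le hS]
end
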